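/- arXiv:2211.01612 — 2 statements merged into one kernel-verified Lean document; each statement's English description precedes it below -/
import Mathlib

section
/- (Theorem 2, optimization form.) Suppose there exists at least one MMDC between A and B. Then the constructed graph G admits a perfect matching, and the minimum of Weight(Main(M)) over all perfect matchings M of G equals the minimum of c(L) over all MMDCs L between A and B. -/
open Finset

section Construction

variable {s t : ℕ}

/-- The left part `S` of the constructed complete bipartite graph `G`:
`A_i` (`α i` copies of `a_i`), `A'_i` (`α' i − α i` copies of `a_i`),
the dummy sets `X_j` (`β' j − β j` vertices) and `W_j` (`s − β' j` vertices). -/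
abbrev LeftV (s t : ℕ) (α α' : Fin s → ℕ) (β β' : Fin t → ℕ) : Type :=
  ((Σ i : Fin s, Fin (α i)) ⊕ (Σ i : Fin s, Fin (α' i - α i))) ⊕
  ((Σ j : Fin t, Fin (β' j - β j)) ⊕ (Σ j : Fin t, Fin (s - β' j)))

/-- The right part `T` of the constructed graph: the sets `Bset_i` (vertex `(i, j)`
is the copy `b_{ji}` of `b_j` lying in `Bset_i`; thus `B_j = {(i, j) : i}`) together
with the compensator set `Y` of `Σ_i α'_i − Σ_j β_j` dummy vertices. -/
abbrev RightV (s t : ℕ) (α' : Fin s → ℕ) (β : Fin t → ℕ) : Type :=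
  (Fin s × Fin t) ⊕ Fin (∑ i, α' i - ∑ j, β j)

variable {α α' : Fin s → ℕ} {β β' : Fin t → ℕ}

/-- Adjacency in the constructed graph `G`: each vertex of `A_i ∪ A'_i` is joined to every
vertex of `Bset_i`; each vertex of `A'_i` is joined to every vertex of `Y`; each vertex of
`X_j` is joined to every vertex of `B_j` and to every vertex of `Y`; each vertex of `W_j`
is joined to every vertex of `B_j`. -/
def Adj : LeftV s t α α' β β' → RightV s t α' β → Prop
  | .inl (.inl ⟨i, _⟩), .inl (i', _) => i' = i       -- A_i — Bset_i
  | .inl (.inl _), .inr _ => False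
  | .inl (.inr ⟨i, _⟩), .inl (i', _) => i' = i       -- A'_i — Bset_i
  | .inl (.inr _), .inr _ => True                     -- A'_i — Y
  | .inr (.inl ⟨j, _⟩), .inl (_, j') => j' = j       -- X_j — B_j
  | .inr (.inl _), .inr _ => True                     -- X_j — Y
  | .inr (.inr ⟨j, _⟩), .inl (_, j') => j' = j       -- W_j — B_j
  | .inr (.inr _), .inr _ => False

/-- Edge weights of the constructed graph `G`. -/
def wt (δ : Fin s → Fin t → ℝ) (γ' γ'' : ℝ) : LeftV s t α α' β β' → RightV s t α' β → ℝ
  | .inl _, .inl (i, j) => δ i j     -- main edges into b_{ji}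
  | .inl (.inl _), .inr _ => 0
  | .inl (.inr _), .inr _ => γ'      -- A'_i — Y
  | .inr (.inl _), .inl _ => γ'      -- X_j — B_j
  | .inr (.inl _), .inr _ => γ''     -- X_j — Y
  | .inr (.inr _), _ => 0            -- W_j — B_j

/-- An edge is a main edge when it joins `⋃_i (A_i ∪ A'_i)` to `⋃_i Bset_i`. -/
def IsMainEdge : LeftV s t α α' β β' → RightV s t α' β → Bool
  | .inl _, .inl _ => true
  | _, _ => false

/-- A perfect matching of `G` is a bijection between the two parts all of whose
pairs are edges of `G`. -/
def IsPM (M : LeftV s t α α' β β' ≃ RightV s t α' β) : Prop :=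
  ∀ v, Adj v (M v)

/-- `Weight(M)`, the total weight of a perfect matching. -/
noncomputable def totalWeight (δ : Fin s → Fin t → ℝ) (γ' γ'' : ℝ)
    (M : LeftV s t α α' β β' ≃ RightV s t α' β) : ℝ :=
  ∑ v, wt δ γ' γ'' v (M v)

/-- `Weight(Main(M))`, the total weight of the main edges of `M`. -/
noncomputable def mainWeight (δ : Fin s → Fin t → ℝ) (γ' γ'' : ℝ)
    (M : LeftV s t α α' β β' ≃ RightV s t α' β) : ℝ :=
  ∑ v ∈ univ.filter (fun v => IsMainEdge v (M v)), wt δ γ' γ'' v (M v)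

/-- `|Main(M)|`, the number of main edges of `M`. -/
def mainCount (M : LeftV s t α α' β β' ≃ RightV s t α' β) : ℕ :=
  (univ.filter (fun v => IsMainEdge v (M v))).card

/-- `L ⊆ A × B` is an MMDC between `A` and `B`: each `a_i` lies in at least `α i` and at
most `α' i` pairs, and each `b_j` lies in at least `β j` and at most `β' j` pairs. -/
def IsMMDC (α α' : Fin s → ℕ) (β β' : Fin t → ℕ) (L : Finset (Fin s × Fin t)) : Prop :=
  (∀ i, α i ≤ (L.filter (fun p => p.1 = i)).card ∧
    (L.filter (fun p => p.1 = i)).card ≤ α' i) ∧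
  (∀ j, β j ≤ (L.filter (fun p => p.2 = j)).card ∧
    (L.filter (fun p => p.2 = j)).card ≤ β' j)

/-- `c(L)`, the cost of a matching `L` between `A` and `B`. -/
noncomputable def cost (δ : Fin s → Fin t → ℝ) (L : Finset (Fin s × Fin t)) : ℝ :=
  ∑ p ∈ L, δ p.1 p.2

end Construction

/-!
Both minima range over the same set of values: `M ↦ mainPairs M`, the set of pairs `(i, j)`
whose copy `b_{ji}` is matched into `A_i ∪ A'_i`, sends perfect matchings onto MMDCs, and
`Weight(Main(M)) = c(mainPairs M)` for every bijection `M`.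

In a perfect matching, `deg a_i` counts the vertices of `A_i ∪ A'_i` matched into `Bset_i`, and
`s - deg b_j` those of `X_j ∪ W_j` matched into `B_j`. Since `A_i` and `W_j` are not joined to
`Y`, all their vertices are matched this way, which gives `α_i ≤ deg a_i` and
`s - β'_j ≤ s - deg b_j`; the sizes `|A_i ∪ A'_i| = α'_i` and `|X_j ∪ W_j| = s - β_j` give the
other two bounds. Conversely, let `L` be an MMDC with degrees `n_i` and `m_j`. Label `b_{ji}` by row `i`
if `(i, j) ∈ L` and by column `j` otherwise, the vertices of `Y` by `Y`, and the vertices of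
`A_i ∪ A'_i` (resp. `X_j ∪ W_j`) by row `i` (resp. column `j`), except for `α'_i - n_i` vertices
of `A'_i` and `m_j - β_j` vertices of `X_j`, which get the label `Y`. Both sides then have the
same number of vertices with each label, so a label-preserving bijection exists; it is a perfect
matching, and `mainPairs M = L`.
-/

theorem card_filter_sum_type {A B : Type*} [Fintype A] [Fintype B] (P : A ⊕ B → Prop)
    [DecidablePred P] : #{w | P w} = #{a | P (.inl a)} + #{b | P (.inr b)} := by
  simp only [card_filter, Fintype.sum_sum_type]

theorem Equiv.card_filter_symm_inl {X A B : Type*} [Fintype X] [Fintype A] [Fintype B]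
    (e : X ≃ A ⊕ B) (P : X → Prop) [DecidablePred P] :
    #{a | P (e.symm (.inl a))} = #{x | P x ∧ (e x).isLeft} := by
  rw [← card_map e.toEmbedding, map_filter, map_univ_equiv, card_filter_sum_type]
  simp

theorem card_filter_snd_add_card_filter_notMem {A B : Type*} [Fintype A] [Fintype B]
    [DecidableEq A] [DecidableEq B] (L : Finset (A × B)) (b : B) :
    #{p ∈ L | p.2 = b} + #{p | p ∉ L ∧ p.2 = b} = Fintype.card A := by
  have column : #{p : A × B | p.2 = b} = Fintype.card A := by
    rw [card_filter, Fintype.sum_prod_type]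
    simp
  rw [← column, ← card_filter_add_card_filter_not (s := {p | p.2 = b}) (· ∈ L)]
  congr 2 <;> ext <;> simp [and_comm]

theorem Fin.card_filter_not_val_lt (N c : ℕ) : #{k : Fin N | ¬(k : ℕ) < c} = N - c := by
  have := card_filter_add_card_filter_not (s := univ) fun k : Fin N => (k : ℕ) < c
  simp only [Fin.card_filter_val_lt, card_univ, Fintype.card_fin] at this
  omega

theorem exists_equiv_comp_eq_of_card_filter_eq {X Y κ : Type*} [Fintype X] [Fintype Y]
    [DecidableEq κ] (f : X → κ) (g : Y → κ) (h : ∀ c, #{x | f x = c} = #{y | g y = c}) :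
    ∃ e : X ≃ Y, ∀ x, g (e x) = f x :=
  ⟨Equiv.ofFiberEquiv fun c => Fintype.equivOfCardEq (by simpa [Fintype.card_subtype] using h c),
    Equiv.ofFiberEquiv_map _⟩

section Graph

variable {s t : ℕ} {α α' : Fin s → ℕ} {β β' : Fin t → ℕ}

def owner : LeftV s t α α' β β' → Fin s ⊕ Fin t
  | .inl (.inl ⟨i, _⟩) | .inl (.inr ⟨i, _⟩) => .inl i
  | .inr (.inl ⟨j, _⟩) | .inr (.inr ⟨j, _⟩) => .inr j

def isSlack : LeftV s t α α' β β' → Bool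
  | .inl (.inr _) | .inr (.inl _) => true
  | _ => false

theorem isLeft_owner (v : LeftV s t α α' β β') : (owner v).isLeft = v.isLeft := by
  rcases v with (_ | _) | (_ | _) <;> rfl

theorem adj_inl_iff {v : LeftV s t α α' β β'} {p : Fin s × Fin t} :
    Adj v (.inl p) ↔ owner v = .inl p.1 ∨ owner v = .inr p.2 := by
  rcases v with (_ | _) | (_ | _) <;> simp [Adj, owner, eq_comm]

theorem adj_inr_iff {v : LeftV s t α α' β β'} {y : Fin (∑ i, α' i - ∑ j, β j)} :
    Adj v (.inr y) ↔ isSlack v := by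
  rcases v with (_ | _) | (_ | _) <;> simp [Adj, isSlack]

variable (α α' β β')

theorem card_filter_leftV (P : LeftV s t α α' β β' → Prop) [DecidablePred P] :
    #{v | P v} = (∑ i, #{k | P (.inl (.inl ⟨i, k⟩))} + ∑ i, #{k | P (.inl (.inr ⟨i, k⟩))}) +
      (∑ j, #{k | P (.inr (.inl ⟨j, k⟩))} + ∑ j, #{k | P (.inr (.inr ⟨j, k⟩))}) := by
  simp only [card_filter, Fintype.sum_sum_type, Fintype.sum_sigma]

theorem card_owner_inl (i : Fin s) :
    #{v : LeftV s t α α' β β' | owner v = .inl i} = α i + (α' i - α i) := by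
  rw [card_filter_leftV]
  simp [apply_ite card, owner]

theorem card_owner_inl_not_slack (i : Fin s) :
    #{v : LeftV s t α α' β β' | owner v = .inl i ∧ isSlack v = false} = α i := by
  rw [card_filter_leftV]
  simp [apply_ite card, owner, isSlack]

theorem card_owner_inr (j : Fin t) :
    #{v : LeftV s t α α' β β' | owner v = .inr j} = (β' j - β j) + (s - β' j) := by
  rw [card_filter_leftV]
  simp [apply_ite card, owner]

theorem card_owner_inr_not_slack (j : Fin t) :
    #{v : LeftV s t α α' β β' | owner v = .inr j ∧ isSlack v = false} = s - β' j := by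
  rw [card_filter_leftV]
  simp [apply_ite card, owner, isSlack]

end Graph

section MainPairs

variable {s t : ℕ} {α α' : Fin s → ℕ} {β β' : Fin t → ℕ}

def mainPairs (M : LeftV s t α α' β β' ≃ RightV s t α' β) : Finset (Fin s × Fin t) :=
  {p | (M.symm (.inl p)).isLeft}

theorem mainWeight_eq_cost_mainPairs (δ : Fin s → Fin t → ℝ) (γ' γ'' : ℝ)
    (M : LeftV s t α α' β β' ≃ RightV s t α' β) :
    mainWeight δ γ' γ'' M = cost δ (mainPairs M) := by
  have main_term : ∀ (v : LeftV s t α α' β β') (p : Fin s × Fin t),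
      (if IsMainEdge v (.inl p) then wt δ γ' γ'' v (.inl p) else 0) =
        if v.isLeft then δ p.1 p.2 else 0 := by
    rintro (_ | _) _ <;> rfl
  have not_main : ∀ (v : LeftV s t α α' β β') y, IsMainEdge v (.inr y) = false := by
    rintro (_ | _) _ <;> rfl
  rw [mainWeight, cost, mainPairs, sum_filter, sum_filter, ← M.symm.sum_comp,
    Fintype.sum_sum_type]
  simp only [Equiv.apply_symm_apply, main_term, not_main]
  simp

theorem card_owner_isLeft_le (M : LeftV s t α α' β β' ≃ RightV s t α' β)
    (c : Fin s ⊕ Fin t) :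
    #{v | owner v = c ∧ (M v).isLeft} ≤ #{v : LeftV s t α α' β β' | owner v = c} :=
  card_le_card <| monotone_filter_right _ fun _ _ hv => hv.1

namespace IsPM

variable {M : LeftV s t α α' β β' ≃ RightV s t α' β}

theorem owner_symm_inl (hM : IsPM M) (p : Fin s × Fin t) :
    owner (M.symm (.inl p)) = .inl p.1 ∨ owner (M.symm (.inl p)) = .inr p.2 :=
  adj_inl_iff.mp (by simpa using hM (M.symm (.inl p)))

theorem isLeft_of_isSlack_eq_false (hM : IsPM M) {v : LeftV s t α α' β β'}
    (hv : isSlack v = false) : (M v).isLeft := by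
  have hadj := hM v
  rcases h : M v with _ | _
  · rfl
  · rw [h, adj_inr_iff, hv] at hadj
    exact absurd hadj Bool.false_ne_true

theorem mem_mainPairs_and_fst_eq_iff (hM : IsPM M) (p : Fin s × Fin t) (i : Fin s) :
    p ∈ mainPairs M ∧ p.1 = i ↔ owner (M.symm (.inl p)) = .inl i := by
  simp only [mainPairs, mem_filter, mem_univ, true_and, ← isLeft_owner]
  rcases hM.owner_symm_inl p with h | h <;> simp [h, eq_comm]

theorem notMem_mainPairs_and_snd_eq_iff (hM : IsPM M) (p : Fin s × Fin t) (j : Fin t) :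
    p ∉ mainPairs M ∧ p.2 = j ↔ owner (M.symm (.inl p)) = .inr j := by
  simp only [mainPairs, mem_filter, mem_univ, true_and, ← isLeft_owner]
  rcases hM.owner_symm_inl p with h | h <;> simp [h, eq_comm]

theorem card_mainPairs_fst (hM : IsPM M) (i : Fin s) :
    #{p ∈ mainPairs M | p.1 = i} = #{v | owner v = .inl i ∧ (M v).isLeft} := by
  rw [← M.card_filter_symm_inl]
  congr 1
  ext p
  simpa using hM.mem_mainPairs_and_fst_eq_iff p i

theorem card_mainPairs_snd (hM : IsPM M) (j : Fin t) :
    #{p ∈ mainPairs M | p.2 = j} + #{v | owner v = .inr j ∧ (M v).isLeft} = s := by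
  rw [← M.card_filter_symm_inl]
  simp only [← hM.notMem_mainPairs_and_snd_eq_iff]
  simpa using card_filter_snd_add_card_filter_notMem (mainPairs M) j

theorem card_owner_not_slack_le (hM : IsPM M) (c : Fin s ⊕ Fin t) :
    #{v : LeftV s t α α' β β' | owner v = c ∧ isSlack v = false} ≤
      #{v | owner v = c ∧ (M v).isLeft} :=
  card_le_card <| monotone_filter_right _ fun _ _ hv =>
    ⟨hv.1, hM.isLeft_of_isSlack_eq_false hv.2⟩

theorem isMMDC_mainPairs (hαα : ∀ i, α i ≤ α' i) (hββ : ∀ j, β j ≤ β' j)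
    (hβ's : ∀ j, β' j ≤ s) (hM : IsPM M) : IsMMDC α α' β β' (mainPairs M) := by
  refine ⟨fun i => ?_, fun j => ?_⟩
  · have lower := hM.card_owner_not_slack_le (.inl i)
    have upper := card_owner_isLeft_le M (.inl i)
    rw [card_owner_inl_not_slack] at lower
    rw [card_owner_inl] at upper
    rw [hM.card_mainPairs_fst]
    have := hαα i
    omega
  · have lower := hM.card_owner_not_slack_le (.inr j)
    have upper := card_owner_isLeft_le M (.inr j)
    rw [card_owner_inr_not_slack] at lower
    rw [card_owner_inr] at upper
    have := hM.card_mainPairs_snd j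
    have := hββ j
    have := hβ's j
    omega

end IsPM

end MainPairs

section Labels

variable {s t : ℕ} {α α' : Fin s → ℕ} {β β' : Fin t → ℕ}

def goesToY (n : Fin s → ℕ) (m : Fin t → ℕ) : LeftV s t α α' β β' → Bool
  | .inl (.inr ⟨i, k⟩) => (k : ℕ) < α' i - n i
  | .inr (.inl ⟨j, k⟩) => (k : ℕ) < m j - β j
  | _ => false

-- `none` stands for `Y`, `some (.inl i)` for row `i` and `some (.inr j)` for column `j`.
def leftLabel (n : Fin s → ℕ) (m : Fin t → ℕ) (v : LeftV s t α α' β β') :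
    Option (Fin s ⊕ Fin t) :=
  if goesToY n m v then none else some (owner v)

def rightLabel (L : Finset (Fin s × Fin t)) : RightV s t α' β → Option (Fin s ⊕ Fin t)
  | .inl p => some (if p ∈ L then .inl p.1 else .inr p.2)
  | .inr _ => none

variable {n : Fin s → ℕ} {m : Fin t → ℕ}

theorem leftLabel_eq_none_iff {v : LeftV s t α α' β β'} :
    leftLabel n m v = none ↔ goesToY n m v := by
  simp [leftLabel]

theorem leftLabel_eq_some_iff {v : LeftV s t α α' β β'} {c : Fin s ⊕ Fin t} :
    leftLabel n m v = some c ↔ goesToY n m v = false ∧ owner v = c := by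
  simp [leftLabel]

theorem isSlack_of_goesToY {v : LeftV s t α α' β β'} (hv : goesToY n m v) : isSlack v := by
  rcases v with (_ | _) | (_ | _) <;> simp_all [goesToY, isSlack]

theorem rightLabel_inl_eq_some_inl_iff {L : Finset (Fin s × Fin t)} {p : Fin s × Fin t}
    {i : Fin s} : rightLabel (α' := α') (β := β) L (.inl p) = some (.inl i) ↔ p ∈ L ∧ p.1 = i := by
  by_cases p ∈ L <;> simp [rightLabel, *]

theorem rightLabel_inl_eq_some_inr_iff {L : Finset (Fin s × Fin t)} {p : Fin s × Fin t}
    {j : Fin t} : rightLabel (α' := α') (β := β) L (.inl p) = some (.inr j) ↔ p ∉ L ∧ p.2 = j := by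
  by_cases p ∈ L <;> simp [rightLabel, *]

theorem adj_of_leftLabel_eq_rightLabel {L : Finset (Fin s × Fin t)} {v : LeftV s t α α' β β'}
    {w : RightV s t α' β} (h : leftLabel n m v = rightLabel L w) : Adj v w := by
  rcases w with p | y
  · rw [adj_inl_iff, (leftLabel_eq_some_iff.mp h).2]
    split_ifs <;> simp
  · exact adj_inr_iff.mpr (isSlack_of_goesToY (leftLabel_eq_none_iff.mp h))

variable (α α' β β' n m)

theorem card_leftLabel_none :
    #{v : LeftV s t α α' β β' | leftLabel n m v = none} =
      ∑ i, min (α' i - α i) (α' i - n i) + ∑ j, min (β' j - β j) (m j - β j) := by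
  rw [card_filter_leftV]
  simp [leftLabel_eq_none_iff, goesToY, Fin.card_filter_val_lt]

theorem card_leftLabel_inl (i : Fin s) :
    #{v : LeftV s t α α' β β' | leftLabel n m v = some (.inl i)} =
      α i + (α' i - α i - (α' i - n i)) := by
  rw [card_filter_leftV]
  simp [leftLabel_eq_some_iff, goesToY, owner, filter_and, apply_ite,
    Fin.card_filter_not_val_lt, -not_lt, -Nat.not_lt]

theorem card_leftLabel_inr (j : Fin t) :
    #{v : LeftV s t α α' β β' | leftLabel n m v = some (.inr j)} =
      (β' j - β j - (m j - β j)) + (s - β' j) := by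
  rw [card_filter_leftV]
  simp [leftLabel_eq_some_iff, goesToY, owner, filter_and, apply_ite,
    Fin.card_filter_not_val_lt, -not_lt, -Nat.not_lt]

variable {α β β'}

theorem card_rightLabel_none (L : Finset (Fin s × Fin t)) :
    #{w : RightV s t α' β | rightLabel L w = none} = ∑ i, α' i - ∑ j, β j := by
  rw [card_filter_sum_type]
  simp [rightLabel]

theorem card_rightLabel_inl (L : Finset (Fin s × Fin t)) (i : Fin s) :
    #{w : RightV s t α' β | rightLabel L w = some (.inl i)} = #{p ∈ L | p.1 = i} := by
  rw [card_filter_sum_type]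
  simp only [rightLabel_inl_eq_some_inl_iff]
  simp [rightLabel]
  congr 1
  ext
  simp

theorem card_rightLabel_inr (L : Finset (Fin s × Fin t)) (j : Fin t) :
    #{w : RightV s t α' β | rightLabel L w = some (.inr j)} = s - #{p ∈ L | p.2 = j} := by
  have column := card_filter_snd_add_card_filter_notMem L j
  rw [Fintype.card_fin] at column
  rw [card_filter_sum_type]
  simp only [rightLabel_inl_eq_some_inr_iff]
  simp [rightLabel]
  omega

end Labels
namespace IsMMDC

variable {s t : ℕ} {α α' : Fin s → ℕ} {β β' : Fin t → ℕ} {L : Finset (Fin s × Fin t)}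

theorem sum_slack_eq (hL : IsMMDC α α' β β' L) :
    ∑ i, (α' i - #{p ∈ L | p.1 = i}) + ∑ j, (#{p ∈ L | p.2 = j} - β j) =
      ∑ i, α' i - ∑ j, β j := by
  have rows : ∑ i, #{p ∈ L | p.1 = i} = #L :=
    (card_eq_sum_card_fiberwise fun _ _ => mem_univ _).symm
  have cols : ∑ j, #{p ∈ L | p.2 = j} = #L :=
    (card_eq_sum_card_fiberwise fun _ _ => mem_univ _).symm
  have rows_le : ∑ i, #{p ∈ L | p.1 = i} ≤ ∑ i, α' i := sum_le_sum fun i _ => (hL.1 i).2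
  have cols_ge : ∑ j, β j ≤ ∑ j, #{p ∈ L | p.2 = j} := sum_le_sum fun j _ => (hL.2 j).1
  rw [sum_tsub_distrib _ fun i _ => (hL.1 i).2, sum_tsub_distrib _ fun j _ => (hL.2 j).1]
  omega

theorem card_leftLabel_eq_card_rightLabel (hβ's : ∀ j, β' j ≤ s) (hL : IsMMDC α α' β β' L)
    (c : Option (Fin s ⊕ Fin t)) :
    #{v : LeftV s t α α' β β' |
        leftLabel (fun i => #{p ∈ L | p.1 = i}) (fun j => #{p ∈ L | p.2 = j}) v = c} =
      #{w : RightV s t α' β | rightLabel L w = c} := by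
  rcases c with _ | i | j
  · rw [card_leftLabel_none, card_rightLabel_none, ← hL.sum_slack_eq]
    congr 1 <;> refine sum_congr rfl fun k _ => ?_
    · have := hL.1 k
      omega
    · have := hL.2 k
      omega
  · rw [card_leftLabel_inl, card_rightLabel_inl]
    have := hL.1 i
    omega
  · rw [card_leftLabel_inr, card_rightLabel_inr]
    have := hL.2 j
    have := hβ's j
    omega

theorem exists_isPM_mainPairs_eq (hβ's : ∀ j, β' j ≤ s) (hL : IsMMDC α α' β β' L) :
    ∃ M : LeftV s t α α' β β' ≃ RightV s t α' β, IsPM M ∧ mainPairs M = L := by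
  obtain ⟨M, hM⟩ :=
    exists_equiv_comp_eq_of_card_filter_eq _ _ (hL.card_leftLabel_eq_card_rightLabel hβ's)
  refine ⟨M, fun v => adj_of_leftLabel_eq_rightLabel (hM v).symm, ?_⟩
  ext p
  have hp := hM (M.symm (.inl p))
  rw [M.apply_symm_apply] at hp
  have hown := congrArg Sum.isLeft
    (leftLabel_eq_some_iff (c := if p ∈ L then .inl p.1 else .inr p.2) |>.mp hp.symm).2
  rw [isLeft_owner] at hown
  simp only [mainPairs, mem_filter, mem_univ, true_and, hown]
  split_ifs <;> simp [*]

end IsMMDC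

theorem min_mainWeight_eq_min_cost_general {s t : ℕ} (α α' : Fin s → ℕ) (β β' : Fin t → ℕ)
    (δ : Fin s → Fin t → ℝ) (γ' γ'' : ℝ)
    (hαα : ∀ i, α i ≤ α' i)
    (hββ : ∀ j, β j ≤ β' j) (hβ's : ∀ j, β' j ≤ s)
    (hex : ∃ L, IsMMDC α α' β β' L) :
    (∃ M : LeftV s t α α' β β' ≃ RightV s t α' β, IsPM M) ∧
    ∃ m : ℝ,
      IsLeast {x : ℝ | ∃ M : LeftV s t α α' β β' ≃ RightV s t α' β,
        IsPM M ∧ x = mainWeight δ γ' γ'' M} m ∧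
      IsLeast {x : ℝ | ∃ L, IsMMDC α α' β β' L ∧ x = cost δ L} m := by
  classical
  obtain ⟨L₀, hL₀⟩ := hex
  obtain ⟨L, hL, hmin⟩ := exists_min_image {L | IsMMDC α α' β β' L} (cost δ) ⟨L₀, by simpa⟩
  simp only [mem_filter, mem_univ, true_and] at hL hmin
  obtain ⟨M, hM, rfl⟩ := hL.exists_isPM_mainPairs_eq hβ's
  refine ⟨⟨M, hM⟩, cost δ (mainPairs M), ⟨⟨M, hM, (mainWeight_eq_cost_mainPairs ..).symm⟩, ?_⟩,
    ⟨⟨_, hL, rfl⟩, ?_⟩⟩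
  · rintro _ ⟨M', hM', rfl⟩
    rw [mainWeight_eq_cost_mainPairs]
    exact hmin _ (hM'.isMMDC_mainPairs hαα hββ hβ's)
  · rintro _ ⟨L', hL', rfl⟩
    exact hmin L' hL'

/-- **Theorem 2, optimization form.** If there exists at least one MMDC
between `A` and `B`, then the constructed graph `G` admits a perfect matching, and the
minimum of `Weight(Main(M))` over all perfect matchings `M` of `G` equals the minimum of
`c(L)` over all MMDCs `L` between `A` and `B`. -/
theorem min_mainWeight_eq_min_cost {s t : ℕ} (α α' : Fin s → ℕ) (β β' : Fin t → ℕ)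
    (δ : Fin s → Fin t → ℝ) (γ' γ'' : ℝ)
    (hs : 1 ≤ s) (ht : 1 ≤ t)
    (hδ0 : ∀ i j, 0 ≤ δ i j)
    (hα1 : ∀ i, 1 ≤ α i) (hαα : ∀ i, α i ≤ α' i) (hα't : ∀ i, α' i ≤ t)
    (hβ1 : ∀ j, 1 ≤ β j) (hββ : ∀ j, β j ≤ β' j) (hβ's : ∀ j, β' j ≤ s)
    (hsum : ∑ j, β j ≤ ∑ i, α' i)
    (hγ' : ∀ i j, δ i j < γ') (hγ'' : γ' < γ'')
    (hex : ∃ L, IsMMDC α α' β β' L) :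
    (∃ M : LeftV s t α α' β β' ≃ RightV s t α' β, IsPM M) ∧
    ∃ m : ℝ,
      IsLeast {x : ℝ | ∃ M : LeftV s t α α' β β' ≃ RightV s t α' β,
        IsPM M ∧ x = mainWeight δ γ' γ'' M} m ∧
      IsLeast {x : ℝ | ∃ L, IsMMDC α α' β β' L ∧ x = cost δ L} m :=
  min_mainWeight_eq_min_cost_general α α' β β' δ γ' γ'' hαα hββ hβ's hex
end

section
/- (Forced structure of perfect matchings in G.) In every perfect matching M of the constructed graph G: every vertex of A_i is matched to a vertex of Bset_i (for each 1 ≤ i ≤ s); every vertex of W_j is matched to a vertex of B_j (for each 1 ≤ j ≤ t); consequently, for each j, at least β_j and at most β'_j of the s vertices of B_j are matched to vertices of ⋃_i (A_i ∪ A'_i), and for each i, at least α_i and at most α'_i of the vertices of Bset_i are matched to vertices of A_i ∪ A'_i. -/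
open Finset

/-!
Adjacency alone forces the structure. A vertex of `A_i` has no edge to `Y`, and a vertex of
`W_j` has no edge outside `B_j`, so both are matched as claimed. The partners of the vertices
of `B_j` are pairwise distinct; those outside the main blocks lie in `X_j ∪ W_j`, a set of
`s - β_j` vertices that contains all of `W_j`, so between `s - β'_j` and `s - β_j` of the
vertices of `B_j` are not matched into the main blocks. Likewise the main-block partners of
the vertices of `Bset_i` lie in `A_i ∪ A'_i`, a set of `α'_i` vertices containing all of `A_i`.
-/

open Function

section Counting

variable {ι κ σ : Type*} [Fintype ι] [Fintype σ]

theorem card_filter_le_card_of_mem_range {g : ι → κ} (hg : Injective g) {h : σ → κ}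
    {q : ι → Prop} [DecidablePred q] (hq : ∀ i, q i → g i ∈ Set.range h) :
    #{i | q i} ≤ Fintype.card σ := by
  classical
  calc #{i | q i} ≤ #(univ.image h) :=
        card_le_card_of_injOn g (fun i hi => by simpa using hq i (mem_filter.1 hi).2)
          hg.injOn
    _ ≤ Fintype.card σ := card_image_le

theorem card_le_card_filter_of_forall_exists {g : ι → κ} {h : σ → κ} (hh : Injective h)
    {q : ι → Prop} [DecidablePred q] (hgh : ∀ x, ∃ i, q i ∧ g i = h x) :
    Fintype.card σ ≤ #{i | q i} := by
  choose f hqf hf using hgh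
  refine card_le_card_of_injOn f (fun x _ => by simpa using hqf x) fun x _ y _ hxy => hh ?_
  rw [← hf x, ← hf y, hxy]

end Counting

section Construction

variable {s t : ℕ} {α α' : Fin s → ℕ} {β β' : Fin t → ℕ}

/-- The vertices `A_i ∪ A'_i`, i.e. the copies of `a_i`. -/
def mainBlock (i : Fin s) : Fin (α i) ⊕ Fin (α' i - α i) → LeftV s t α α' β β' :=
  Sum.elim (fun k => .inl (.inl ⟨i, k⟩)) (fun k => .inl (.inr ⟨i, k⟩))

/-- The dummy vertices `X_j ∪ W_j` attached to `B_j`. -/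
def dummyBlock (j : Fin t) : Fin (β' j - β j) ⊕ Fin (s - β' j) → LeftV s t α α' β β' :=
  Sum.elim (fun k => .inr (.inl ⟨j, k⟩)) (fun k => .inr (.inr ⟨j, k⟩))

theorem Adj.mem_range_mainBlock {v : LeftV s t α α' β β'} {i : Fin s} {j : Fin t}
    (h : Adj v (.inl (i, j))) (hv : v.isLeft) : v ∈ Set.range (mainBlock i) := by
  rcases v with (⟨i', k⟩ | ⟨i', k⟩) | _
  · obtain rfl : i = i' := h
    exact ⟨.inl k, rfl⟩
  · obtain rfl : i = i' := h
    exact ⟨.inr k, rfl⟩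
  · simp at hv

theorem Adj.mem_range_dummyBlock {v : LeftV s t α α' β β'} {i : Fin s} {j : Fin t}
    (h : Adj v (.inl (i, j))) (hv : ¬ v.isLeft) : v ∈ Set.range (dummyBlock j) := by
  rcases v with _ | (⟨j', k⟩ | ⟨j', k⟩)
  · simp at hv
  · obtain rfl : j = j' := h
    exact ⟨.inl k, rfl⟩
  · obtain rfl : j = j' := h
    exact ⟨.inr k, rfl⟩

namespace IsPM

variable {M : LeftV s t α α' β β' ≃ RightV s t α' β}

theorem adj_symm_apply (hM : IsPM M) (x : RightV s t α' β) : Adj (M.symm x) x := by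
  simpa using hM (M.symm x)

theorem exists_apply_A_eq (hM : IsPM M) (i : Fin s) (k : Fin (α i)) :
    ∃ j, M (.inl (.inl ⟨i, k⟩)) = .inl (i, j) := by
  have h := hM (.inl (.inl ⟨i, k⟩))
  rcases hMv : M (.inl (.inl ⟨i, k⟩)) with ⟨i', j⟩ | _ <;> rw [hMv] at h
  · obtain rfl : i' = i := h
    exact ⟨j, rfl⟩
  · exact h.elim

theorem exists_apply_W_eq (hM : IsPM M) (j : Fin t) (k : Fin (s - β' j)) :
    ∃ i, M (.inr (.inr ⟨j, k⟩)) = .inl (i, j) := by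
  have h := hM (.inr (.inr ⟨j, k⟩))
  rcases hMv : M (.inr (.inr ⟨j, k⟩)) with ⟨i, j'⟩ | _ <;> rw [hMv] at h
  · obtain rfl : j' = j := h
    exact ⟨i, rfl⟩
  · exact h.elim

theorem card_Bset_matched_main (hM : IsPM M) {i : Fin s} (hαα : α i ≤ α' i) :
    α i ≤ #{j | (M.symm (.inl (i, j))).isLeft} ∧
      #{j | (M.symm (.inl (i, j))).isLeft} ≤ α' i := by
  have hinj : Injective fun j => M.symm (.inl (i, j)) :=
    M.symm.injective.comp fun _ _ h => (Prod.ext_iff.1 (Sum.inl_injective h)).2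
  constructor
  · simpa using card_le_card_filter_of_forall_exists (g := fun j => M.symm (.inl (i, j)))
      (h := fun k : Fin (α i) => (.inl (.inl ⟨i, k⟩) : LeftV s t α α' β β'))
      (fun _ _ h => by simpa using h) fun k => by
        obtain ⟨j, hj⟩ := hM.exists_apply_A_eq i k
        have e := M.symm_apply_eq.2 hj.symm
        exact ⟨j, by rw [e]; rfl, e⟩
  · have := card_filter_le_card_of_mem_range hinj
      fun j hj => (hM.adj_symm_apply _).mem_range_mainBlock hj
    simp only [Fintype.card_sum, Fintype.card_fin] at this
    omega

theorem card_B_matched_dummy (hM : IsPM M) {j : Fin t} (hββ : β j ≤ β' j) (hβ's : β' j ≤ s) :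
    s - β' j ≤ #{i | ¬ (M.symm (.inl (i, j))).isLeft} ∧
      #{i | ¬ (M.symm (.inl (i, j))).isLeft} ≤ s - β j := by
  have hinj : Injective fun i => M.symm (.inl (i, j)) :=
    M.symm.injective.comp fun _ _ h => (Prod.ext_iff.1 (Sum.inl_injective h)).1
  constructor
  · simpa using card_le_card_filter_of_forall_exists (g := fun i => M.symm (.inl (i, j)))
      (h := fun k : Fin (s - β' j) => (.inr (.inr ⟨j, k⟩) : LeftV s t α α' β β'))
      (fun _ _ h => by simpa using h) fun k => by
        obtain ⟨i, hi⟩ := hM.exists_apply_W_eq j k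
        have e := M.symm_apply_eq.2 hi.symm
        exact ⟨i, by rw [e]; rfl, e⟩
  · have := card_filter_le_card_of_mem_range hinj
      fun i hi => (hM.adj_symm_apply _).mem_range_dummyBlock hi
    simp only [Fintype.card_sum, Fintype.card_fin] at this
    omega

theorem card_B_matched_main (hM : IsPM M) {j : Fin t} (hββ : β j ≤ β' j) (hβ's : β' j ≤ s) :
    β j ≤ #{i | (M.symm (.inl (i, j))).isLeft} ∧
      #{i | (M.symm (.inl (i, j))).isLeft} ≤ β' j := by
  have hsplit := card_filter_add_card_filter_not (s := univ)
    fun i : Fin s => (M.symm (.inl (i, j))).isLeft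
  rw [card_univ, Fintype.card_fin] at hsplit
  have := hM.card_B_matched_dummy hββ hβ's
  omega

end IsPM

end Construction

theorem pm_forced_structure_general {s t : ℕ} (α α' : Fin s → ℕ) (β β' : Fin t → ℕ)
    (hαα : ∀ i, α i ≤ α' i)
    (hββ : ∀ j, β j ≤ β' j) (hβ's : ∀ j, β' j ≤ s)
    (M : LeftV s t α α' β β' ≃ RightV s t α' β) (hM : IsPM M) :
    (∀ (i : Fin s) (k : Fin (α i)), ∃ j : Fin t,
        M (Sum.inl (Sum.inl ⟨i, k⟩)) = Sum.inl (i, j)) ∧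
    (∀ (j : Fin t) (k : Fin (s - β' j)), ∃ i : Fin s,
        M (Sum.inr (Sum.inr ⟨j, k⟩)) = Sum.inl (i, j)) ∧
    (∀ j : Fin t,
        β j ≤ (univ.filter (fun i : Fin s => (M.symm (Sum.inl (i, j))).isLeft)).card ∧
        (univ.filter (fun i : Fin s => (M.symm (Sum.inl (i, j))).isLeft)).card ≤ β' j) ∧
    (∀ i : Fin s,
        α i ≤ (univ.filter (fun j : Fin t => (M.symm (Sum.inl (i, j))).isLeft)).card ∧
        (univ.filter (fun j : Fin t => (M.symm (Sum.inl (i, j))).isLeft)).card ≤ α' i) := by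
  exact ⟨hM.exists_apply_A_eq, hM.exists_apply_W_eq,
    fun j => hM.card_B_matched_main (hββ j) (hβ's j), fun i => hM.card_Bset_matched_main (hαα i)⟩

/-- **forced structure of perfect matchings in `G`.** In every perfect
matching `M` of the constructed graph `G`: every vertex of `A_i` is matched to a vertex
of `Bset_i`; every vertex of `W_j` is matched to a vertex of
`B_j = {b_{ji} = (i, j) : 1 ≤ i ≤ s}`; consequently, for each `j`, at least `β j` and at
most `β' j` of the `s` vertices of `B_j` are matched to vertices of `⋃_i (A_i ∪ A'_i)`
(i.e. their partner under `M` lies in the left main blocks), and for each `i`, at least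
`α i` and at most `α' i` of the vertices of `Bset_i` are matched to vertices of
`A_i ∪ A'_i`. -/
theorem pm_forced_structure {s t : ℕ} (α α' : Fin s → ℕ) (β β' : Fin t → ℕ)
    (δ : Fin s → Fin t → ℝ) (γ' γ'' : ℝ)
    (hs : 1 ≤ s) (ht : 1 ≤ t)
    (hδ0 : ∀ i j, 0 ≤ δ i j)
    (hα1 : ∀ i, 1 ≤ α i) (hαα : ∀ i, α i ≤ α' i) (hα't : ∀ i, α' i ≤ t)
    (hβ1 : ∀ j, 1 ≤ β j) (hββ : ∀ j, β j ≤ β' j) (hβ's : ∀ j, β' j ≤ s)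
    (hsum : ∑ j, β j ≤ ∑ i, α' i)
    (hγ' : ∀ i j, δ i j < γ') (hγ'' : γ' < γ'')
    (M : LeftV s t α α' β β' ≃ RightV s t α' β) (hM : IsPM M) :
    (∀ (i : Fin s) (k : Fin (α i)), ∃ j : Fin t,
        M (Sum.inl (Sum.inl ⟨i, k⟩)) = Sum.inl (i, j)) ∧
    (∀ (j : Fin t) (k : Fin (s - β' j)), ∃ i : Fin s,
        M (Sum.inr (Sum.inr ⟨j, k⟩)) = Sum.inl (i, j)) ∧
    (∀ j : Fin t,
        β j ≤ (univ.filter (fun i : Fin s => (M.symm (Sum.inl (i, j))).isLeft)).card ∧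
        (univ.filter (fun i : Fin s => (M.symm (Sum.inl (i, j))).isLeft)).card ≤ β' j) ∧
    (∀ i : Fin s,
        α i ≤ (univ.filter (fun j : Fin t => (M.symm (Sum.inl (i, j))).isLeft)).card ∧
        (univ.filter (fun j : Fin t => (M.symm (Sum.inl (i, j))).isLeft)).card ≤ α' i) :=
  pm_forced_structure_general α α' β β' hαα hββ hβ's M hM
end
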